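/- Let τ = 𝟙₂/2 be the maximally mixed state on ℂ², and for each n ≥ 2 define ξ_n ∈ D((ℂ²)^{⊗n}) by: ξ_n = binom(n, n/2)^{−1} Σ_{x∈{0,1}^n, ‖x‖₁ = n/2} |x⟩⟨x| if n is even, and ξ_n = ξ_{n−1} ⊗ τ if n is odd. Then for every n ≥ 2 and every integer r with 1 ≤ r ≤ (n−1)/4, the state ξ_n is not a binom(n,r)-almost i.i.d. (MSR almost i.i.d.) state in τ. -/

import Mathlib

open scoped BigOperators ComplexOrder
open Filter Matrix

noncomputable section

namespace AlmostIID

/-- The trace norm `‖A‖₁ = Tr √(A†A)` of a square complex matrix. -/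
def traceNorm {m : Type*} [Fintype m] [DecidableEq m] (A : Matrix m m ℂ) : ℝ :=
  (((Matrix.posSemidef_conjTranspose_mul_self A).1.eigenvectorUnitary.1 *
      Matrix.diagonal ((fun x : ℝ => ((Real.sqrt x : ℝ) : ℂ)) ∘
        (Matrix.posSemidef_conjTranspose_mul_self A).1.eigenvalues) *
      (star (Matrix.posSemidef_conjTranspose_mul_self A).1.eigenvectorUnitary :
        Matrix m m ℂ)).trace).re

/-- A density matrix (state): positive semidefinite with unit trace. -/
def IsState {m : Type*} [Fintype m] (M : Matrix m m ℂ) : Prop :=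
  M.PosSemidef ∧ M.trace = 1

/-- The marginal (reduced density matrix) of an `n`-partite operator on the
coordinates in `I`, i.e. the partial trace over the complement of `I`. -/
def marginal {κ : Type*} [Fintype κ] {n : ℕ}
    (M : Matrix (Fin n → κ) (Fin n → κ) ℂ) (I : Finset (Fin n)) :
    Matrix ({i : Fin n // i ∈ I} → κ) ({i : Fin n // i ∈ I} → κ) ℂ :=
  fun a b => ∑ f : {i : Fin n // i ∉ I} → κ,
    M (fun i => if h : i ∈ I then a ⟨i, h⟩ else f ⟨i, h⟩)
      (fun i => if h : i ∈ I then b ⟨i, h⟩ else f ⟨i, h⟩)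

/-- The single-site reduced density matrix on the `i`-th tensor factor. -/
def siteMarginal {κ : Type*} [Fintype κ] {n : ℕ}
    (M : Matrix (Fin n → κ) (Fin n → κ) ℂ) (i : Fin n) : Matrix κ κ ℂ :=
  fun a b => ∑ f : {j : Fin n // j ≠ i} → κ,
    M (fun j => if h : j = i then a else f ⟨j, h⟩)
      (fun j => if h : j = i then b else f ⟨j, h⟩)

/-- The i.i.d. product state `ρ^{⊗ι}` on the tensor factors indexed by `ι`. -/
def iidOn {κ : Type*} (ι : Type*) [Fintype ι] (ρ : Matrix κ κ ℂ) :
    Matrix (ι → κ) (ι → κ) ℂ :=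
  fun a b => ∏ i, ρ (a i) (b i)

/-- The product state `φ 0 ⊗ φ 1 ⊗ ⋯`. -/
def prodState {κ : Type*} {ι : Type*} [Fintype ι] (φ : ι → Matrix κ κ ℂ) :
    Matrix (ι → κ) (ι → κ) ℂ :=
  fun a b => ∏ i, φ i (a i) (b i)

/-- The quantum Wasserstein norm of order 1 of a difference of states:
the minimum of `Σ cᵢ` over decompositions `X = Σ cᵢ (τ⁽ⁱ⁾ − η⁽ⁱ⁾)` with `cᵢ ≥ 0`,
`τ⁽ⁱ⁾, η⁽ⁱ⁾` states with equal partial traces over the `i`-th factor. -/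
def W1 {κ : Type*} [Fintype κ] [DecidableEq κ] {n : ℕ}
    (X : Matrix (Fin n → κ) (Fin n → κ) ℂ) : ℝ :=
  sInf { w : ℝ |
    ∃ (c : Fin n → ℝ) (τ η : Fin n → Matrix (Fin n → κ) (Fin n → κ) ℂ),
      (∀ i, 0 ≤ c i) ∧ (∀ i, IsState (τ i)) ∧ (∀ i, IsState (η i)) ∧
      (∀ i, marginal (τ i) ({i}ᶜ : Finset (Fin n)) = marginal (η i) ({i}ᶜ : Finset (Fin n))) ∧
      X = ∑ i, c i • (τ i - η i) ∧ w = ∑ i, c i }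

/-- The local variation norm. -/
def LV {κ : Type*} [Fintype κ] [DecidableEq κ] {n : ℕ}
    (X : Matrix (Fin n → κ) (Fin n → κ) ℂ) : ℝ :=
  (1/2) * ∑ k ∈ Finset.Icc 1 n, ((2:ℝ)^k)⁻¹ *
    (((n.choose k : ℝ))⁻¹ *
      ∑ I ∈ Finset.powersetCard k (Finset.univ : Finset (Fin n)),
        traceNorm (marginal X I))


/-- The action of the permutation unitary `U_π` on a vector of `K^{⊗n}`. -/
def permVec {κ : Type*} {n : ℕ} (π : Equiv.Perm (Fin n)) (v : (Fin n → κ) → ℂ) :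
    (Fin n → κ) → ℂ :=
  fun x => v (fun i => x (π i))

/-- The vector `|ψ⟩^{⊗(n−r)} ⊗ |ω⟩` in `K^{⊗n}`. -/
def baseVec {κ : Type*} [Fintype κ] (n r : ℕ) (hrn : r ≤ n)
    (ψ : κ → ℂ) (ω : (Fin r → κ) → ℂ) : (Fin n → κ) → ℂ :=
  fun x => (∏ i : Fin (n - r), ψ (x (Fin.castLE (Nat.sub_le n r) i))) *
    ω (fun j => x ⟨n - r + j.val, by have := j.isLt; omega⟩)

/-- The set `V^n_r(K, |ψ⟩) = {U_π(|ψ⟩^{⊗(n−r)} ⊗ |ω⟩) : π ∈ S_n, |ω⟩ a unit vector of K^{⊗r}}`. -/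
def Vset {κ : Type*} [Fintype κ] (n r : ℕ) (hrn : r ≤ n) (ψ : κ → ℂ) :
    Set ((Fin n → κ) → ℂ) :=
  { v | ∃ (π : Equiv.Perm (Fin n)) (ω : (Fin r → κ) → ℂ),
      (∑ y, Complex.normSq (ω y)) = 1 ∧ v = permVec π (baseVec n r hrn ψ ω) }

/-- The reduced state on `A` of the pure state on `A ⊗ E` with vector `ψ`. -/
def reducedA {dA dE : ℕ} (ψ : Fin dA × Fin dE → ℂ) : Matrix (Fin dA) (Fin dA) ℂ :=
  fun a b => ∑ e : Fin dE, ψ (a, e) * (starRingEnd ℂ) (ψ (b, e))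

/-- The partial trace over all the `E` factors of an operator on `(A ⊗ E)^{⊗n}`. -/
def traceOutE {dA dE n : ℕ}
    (Ω : Matrix (Fin n → Fin dA × Fin dE) (Fin n → Fin dA × Fin dE) ℂ) :
    Matrix (Fin n → Fin dA) (Fin n → Fin dA) ℂ :=
  fun x y => ∑ e : Fin n → Fin dE, Ω (fun i => (x i, e i)) (fun i => (y i, e i))

/-- `ρₙ` is a `(n,r)`-MSR almost i.i.d. state, witnessed by the purification `ψ` on
`H_A ⊗ H_E`: there is a permutation-invariant extension `Ω` on `(A ⊗ E)^{⊗n}` whose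
partial trace over the `E` factors is `ρₙ` and whose support lies in
`span V^n_r(H_A ⊗ H_E, |ψ⟩)`. -/
def IsMSRWitnessed {dA dE : ℕ} (n r : ℕ) (hrn : r ≤ n) (ψ : Fin dA × Fin dE → ℂ)
    (ρn : Matrix (Fin n → Fin dA) (Fin n → Fin dA) ℂ) : Prop :=
  ∃ Ω : Matrix (Fin n → Fin dA × Fin dE) (Fin n → Fin dA × Fin dE) ℂ,
    IsState Ω ∧
    ρn = traceOutE Ω ∧
    (∀ (π : Equiv.Perm (Fin n)) (x y : Fin n → Fin dA × Fin dE),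
      Ω (fun i => x (π i)) (fun i => y (π i)) = Ω x y) ∧
    LinearMap.range (Matrix.mulVecLin Ω) ≤ Submodule.span ℂ (Vset n r hrn ψ)

/-- For even `n`: the uniform mixture of computational-basis states of Hamming
weight `n/2`, as a diagonal state on `(ℂ²)^{⊗n}`. -/
def xiEven (n : ℕ) : Matrix (Fin n → Fin 2) (Fin n → Fin 2) ℂ :=
  Matrix.diagonal fun x =>
    if 2 * (∑ i, (x i : ℕ)) = n then ((n.choose (n / 2) : ℂ))⁻¹ else 0

/-- The state `ξₙ`: for even `n`, the uniform mixture of basis states of Hamming weight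
`n/2`; for odd `n`, `ξ_{n−1} ⊗ τ` where `τ = 𝟙₂/2`. -/
def xi : (n : ℕ) → Matrix (Fin n → Fin 2) (Fin n → Fin 2) ℂ
  | 0 => 1
  | (m + 1) =>
    if Even (m + 1) then xiEven (m + 1)
    else fun a b =>
      xiEven m (fun i => a i.castSucc) (fun i => b i.castSucc) *
        ((2 : ℂ))⁻¹ * (if a (Fin.last m) = b (Fin.last m) then 1 else 0)

/-- `ρₙ` is a `binom(n,r)`-almost i.i.d. (MSR almost i.i.d.) state in `ρ`: there exist
an environment `H_E = ℂ^{dE}`, a purification `ψ` of `ρ` on `H_A ⊗ H_E`, and a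
permutation-invariant extension of `ρₙ` supported in `span V^n_r(H_A ⊗ H_E, |ψ⟩)`. -/
def IsMSR {dA : ℕ} (n r : ℕ) (hrn : r ≤ n) (ρ : Matrix (Fin dA) (Fin dA) ℂ)
    (ρn : Matrix (Fin n → Fin dA) (Fin n → Fin dA) ℂ) : Prop :=
  ∃ (dE : ℕ) (ψ : Fin dA × Fin dE → ℂ),
    (∑ v, Complex.normSq (ψ v)) = 1 ∧ ρ = reducedA ψ ∧ IsMSRWitnessed n r hrn ψ ρn

/-!
Write the purification `ψ` as the reference vector `a₀` of an orthonormal basis `U` of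
`ℂ² ⊗ ℂ^{dE}`, and measure weights of product-basis vectors by the Hamming distance to `a₀^{⊗n}`.
Every vector of `span V^n_r` has weight at most `r`. A nonzero column `v` of an extension `Ω` of
`ξₙ` lies in that span, and it is annihilated by `∑_{i ∈ J} (σ_z ⊗ 𝟙)_i`, where `J` is the set
of the first `2⌊n/2⌋` sites, since `ξₙ` is supported on strings with as many zeros as ones on `J`.
As the reduced state of `ψ` is `𝟙/2`, `Z = U⋆(σ_z ⊗ 𝟙)U` is a unitary with `⟨a₀|Z|a₀⟩ = 0`. So the
weight-`(k+1)` component of `∑_{i ∈ J} Z_i v` is `A w`, where `w` is the top-weight component of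
`v` (of weight `k ≤ r`) and `A = ∑_{i ∈ J} (Z |a₀⟩⟨a₀|)_i` raises the weight by one. But the
commutator estimate `A⋆A - AA⋆ ≥ ∑_{i ∈ J} (|a₀⟩⟨a₀| - (𝟙 - |a₀⟩⟨a₀|))_i` gives
`‖A w‖² ≥ (#J - 2k) ‖w‖² > 0`.
-/

open Finset

section ProdState
variable {ι κ : Type*} [Fintype ι]

theorem conjTranspose_prodState (A : ι → Matrix κ κ ℂ) :
    (prodState A)ᴴ = prodState fun i => (A i)ᴴ := by
  ext x y
  simp [prodState, conjTranspose_apply]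

theorem prodState_one [DecidableEq κ] : prodState (1 : ι → Matrix κ κ ℂ) = 1 := by
  ext x y
  simp [prodState, one_apply, Fintype.prod_boole, funext_iff]

variable [DecidableEq ι] [Fintype κ]

theorem prodState_mul (A B : ι → Matrix κ κ ℂ) :
    prodState A * prodState B = prodState (A * B) := by
  ext x y
  simp only [prodState, mul_apply, Pi.mul_apply, Fintype.prod_sum, prod_mul_distrib]

end ProdState

section SiteOp
variable {κ : Type*} [DecidableEq κ] {n : ℕ}

/-- `Z_i = 𝟙 ⊗ ⋯ ⊗ Z ⊗ ⋯ ⊗ 𝟙`, with `Z` on the `i`-th tensor factor. -/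
def siteOp (i : Fin n) (Z : Matrix κ κ ℂ) : Matrix (Fin n → κ) (Fin n → κ) ℂ :=
  prodState (Function.update 1 i Z)

theorem siteOp_apply (i : Fin n) (Z : Matrix κ κ ℂ) (x y : Fin n → κ) :
    siteOp i Z x y = Z (x i) (y i) * ∏ j ∈ univ.erase i, (1 : Matrix κ κ ℂ) (x j) (y j) := by
  rw [siteOp, prodState, ← mul_prod_erase _ _ (mem_univ i)]
  congr 1
  · simp
  · refine prod_congr rfl fun j hj => ?_
    rw [Function.update_of_ne (ne_of_mem_erase hj), Pi.one_apply]

theorem siteOp_sub (i : Fin n) (A B : Matrix κ κ ℂ) :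
    siteOp i (A - B) = siteOp i A - siteOp i B := by
  ext x y
  simp only [siteOp_apply, Matrix.sub_apply, sub_mul]

theorem conjTranspose_siteOp (i : Fin n) (A : Matrix κ κ ℂ) :
    (siteOp i A)ᴴ = siteOp i Aᴴ := by
  rw [siteOp, conjTranspose_prodState, siteOp]
  congr 1
  funext k
  by_cases hk : k = i
  · subst hk; simp
  · simp [Function.update_of_ne hk]

theorem siteOp_diagonal (i : Fin n) (d : κ → ℂ) :
    siteOp i (diagonal d) = diagonal fun x => d (x i) := by
  ext x y
  rw [siteOp_apply]
  by_cases hxy : x = y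
  · subst hxy; simp
  · obtain ⟨j, hj⟩ := Function.ne_iff.mp hxy
    rw [diagonal_apply_ne _ hxy]
    by_cases hji : j = i
    · subst hji; simp [hj]
    · exact mul_eq_zero_of_right _ (prod_eq_zero (mem_erase.mpr ⟨hji, mem_univ j⟩) (by simp [hj]))

theorem sum_siteOp_diagonal (J : Finset (Fin n)) (d : κ → ℂ) :
    ∑ i ∈ J, siteOp i (diagonal d) = diagonal fun x => ∑ i ∈ J, d (x i) := by
  simp only [siteOp_diagonal]
  ext x y
  by_cases hxy : x = y
  · subst hxy; simp [Matrix.sum_apply]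
  · simp [Matrix.sum_apply, hxy]

variable [Fintype κ]

theorem siteOp_mul (i : Fin n) (A B : Matrix κ κ ℂ) :
    siteOp i A * siteOp i B = siteOp i (A * B) := by
  rw [siteOp, siteOp, prodState_mul, siteOp, ← Function.update_mul, mul_one]

theorem siteOp_mul_comm {i j : Fin n} (hij : i ≠ j) (A B : Matrix κ κ ℂ) :
    siteOp i A * siteOp j B = siteOp j B * siteOp i A := by
  rw [siteOp, siteOp, prodState_mul, prodState_mul]
  congr 1
  funext k
  by_cases hi : k = i
  · subst hi; simp [Function.update_of_ne hij]
  · by_cases hj : k = j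
    · subst hj; simp [Function.update_of_ne hi]
    · simp [Function.update_of_ne hi, Function.update_of_ne hj]

theorem posSemidef_siteOp (i : Fin n) {A : Matrix κ κ ℂ} (hA : A.PosSemidef) :
    (siteOp i A).PosSemidef := by
  open scoped MatrixOrder in
  obtain ⟨B, rfl⟩ := CStarAlgebra.nonneg_iff_eq_star_mul_self.mp hA.nonneg
  rw [star_eq_conjTranspose, ← siteOp_mul, ← conjTranspose_siteOp]
  exact posSemidef_conjTranspose_mul_self _

theorem siteOp_mulVec_apply (i : Fin n) (Z : Matrix κ κ ℂ) (v : (Fin n → κ) → ℂ)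
    (s : Fin n → κ) :
    (siteOp i Z *ᵥ v) s = ∑ a, Z (s i) a * v (Function.update s i a) := by
  simp only [mulVec, dotProduct, siteOp_apply]
  symm
  refine Fintype.sum_of_injective (Function.update s i) (Function.update_injective s i) _ _
    (fun y hy => ?_) (fun a => ?_)
  · obtain ⟨j, hji, hj⟩ : ∃ j, j ≠ i ∧ s j ≠ y j := by
      by_contra! h
      exact hy ⟨y i, funext fun j => by
        by_cases hji : j = i
        · subst hji; simp
        · rw [Function.update_of_ne hji, h j hji]⟩
    rw [prod_eq_zero (mem_erase.mpr ⟨hji, mem_univ j⟩) (by simp [hj])]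
    simp
  · rw [prod_eq_one fun j hj => by rw [Function.update_of_ne (ne_of_mem_erase hj), one_apply_eq]]
    simp

end SiteOp

section StarRing
variable {R : Type*} [Ring R] [StarRing R]

theorem star_sum_mul_sum_of_commute {ι : Type*} (J : Finset ι) (x : ι → R)
    (hx : ∀ i ∈ J, ∀ j ∈ J, i ≠ j → Commute (star (x i)) (x j)) :
    star (∑ i ∈ J, x i) * ∑ i ∈ J, x i =
      (∑ i ∈ J, x i) * star (∑ i ∈ J, x i) + ∑ i ∈ J, (star (x i) * x i - x i * star (x i)) := by
  rw [← sub_eq_iff_eq_add', star_sum, sum_mul_sum, sum_mul_sum,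
    sum_comm (s := J) (t := J) (f := fun i j => x i * star (x j)), ← sum_sub_distrib]
  refine sum_congr rfl fun i hi => ?_
  rw [← sum_sub_distrib,
    sum_eq_single_of_mem i hi fun j hj hji => by rw [(hx i hi j hj hji.symm).eq, sub_self]]

theorem isIdempotentElem_one_sub_sub_mul_star {p z : R} (hp : IsIdempotentElem p)
    (hp' : star p = p) (hz : star z * z = 1) (hpzp : p * z * p = 0) :
    IsIdempotentElem (1 - p - z * p * star (z * p)) := by
  set r := z * p
  have hrr : star r * r = p := by
    rw [star_mul, hp', mul_assoc, ← mul_assoc (star z), hz, one_mul, hp.eq]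
  have hpr : p * r = 0 := by rw [← mul_assoc, hpzp]
  have hrp : star r * p = 0 := by rw [← hp', ← star_mul, hpr, star_zero]
  have hpK : p * (r * star r) = 0 := by rw [← mul_assoc, hpr, zero_mul]
  have hKp : r * star r * p = 0 := by rw [mul_assoc, hrp, mul_zero]
  have hKK : r * star r * (r * star r) = r * star r := by
    rw [mul_assoc, ← mul_assoc (star r), hrr, ← mul_assoc, mul_assoc z, hp.eq]
  unfold IsIdempotentElem
  simp only [sub_mul, mul_sub, one_mul, mul_one, hpK, hKp, hKK, hp.eq]
  abel

end StarRing

section Raising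
variable {κ : Type*} [DecidableEq κ] {n : ℕ}

def refSign (a₀ a : κ) : ℂ := if a = a₀ then 1 else -1

theorem re_sum_refSign_pos {a₀ : κ} {J : Finset (Fin n)} {s : Fin n → κ}
    (hs : 2 * hammingDist s (fun _ => a₀) < #J) : 0 < (∑ i ∈ J, refSign a₀ (s i)).re := by
  have hre : ∀ a, (refSign a₀ a).re = 1 - 2 * if a ≠ a₀ then 1 else 0 := fun a => by
    by_cases ha : a = a₀ <;> simp [refSign, ha]; norm_num
  have hcard : #{i ∈ J | s i ≠ a₀} ≤ hammingDist s (fun _ => a₀) :=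
    card_le_card (filter_subset_filter _ (subset_univ J))
  rw [Complex.re_sum, sum_congr rfl fun i _ => hre (s i), sum_sub_distrib, ← mul_sum, sum_boole]
  simp only [sum_const, nsmul_eq_mul, mul_one]
  have : 2 * #{i ∈ J | ¬s i = a₀} < #J := by simp only [ne_eq] at hcard; omega
  have : (2 * #{i ∈ J | ¬s i = a₀} : ℝ) < #J := by exact_mod_cast this
  linarith

variable [Fintype κ]

theorem re_star_dotProduct_diagonal_mulVec (d w : κ → ℂ) :
    (star w ⬝ᵥ (diagonal d *ᵥ w)).re = ∑ a, (d a).re * Complex.normSq (w a) := by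
  simp only [dotProduct, mulVec_diagonal, Complex.re_sum, Pi.star_apply]
  refine sum_congr rfl fun a _ => ?_
  rw [mul_left_comm, Complex.star_def, ← Complex.normSq_eq_conj_mul_self, Complex.re_mul_ofReal]

/-- `Z |a₀⟩⟨a₀|`. When `⟨a₀|Z|a₀⟩ = 0` it maps `a₀` into its orthogonal complement, so on tensor
products it raises the Hamming distance to `a₀^{⊗n}` by one. -/
def raisingPart (a₀ : κ) (Z : Matrix κ κ ℂ) : Matrix κ κ ℂ := Z * diagonal (Pi.single a₀ 1)

variable {a₀ : κ} {Z : Matrix κ κ ℂ}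

theorem posSemidef_commutator_raisingPart (hZ : Zᴴ * Z = 1) (hZ₀ : Z a₀ a₀ = 0) :
    ((raisingPart a₀ Z)ᴴ * raisingPart a₀ Z - raisingPart a₀ Z * (raisingPart a₀ Z)ᴴ -
      diagonal (refSign a₀)).PosSemidef := by
  unfold raisingPart
  set P : Matrix κ κ ℂ := diagonal (Pi.single a₀ 1)
  have hP : IsIdempotentElem P := by
    rw [IsIdempotentElem, diagonal_mul_diagonal]
    congr 1; ext a; by_cases ha : a = a₀ <;> simp [ha]
  have hP' : star P = P := by
    rw [star_eq_conjTranspose, diagonal_conjTranspose]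
    congr 1; ext a; by_cases ha : a = a₀ <;> simp [ha]
  have hPZP : P * Z * P = 0 := by
    ext a b
    by_cases ha : a = a₀ <;> by_cases hb : b = a₀ <;> simp [P, ha, hb, hZ₀]
  have hRR : (Z * P)ᴴ * (Z * P) = P := by
    rw [conjTranspose_mul, ← star_eq_conjTranspose P, hP', Matrix.mul_assoc,
      ← Matrix.mul_assoc Zᴴ, hZ, Matrix.one_mul, hP.eq]
  have hsign : diagonal (refSign a₀) = P - (1 - P) := by
    ext a b
    by_cases hab : a = b
    · subst hab; by_cases ha : a = a₀ <;> simp [P, refSign, ha]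
    · simp [P, hab]
  -- the remainder is the projection `D = 𝟙 - P - (Z P)(Z P)⋆`, hence `D⋆ D`
  set D := 1 - P - Z * P * star (Z * P)
  have hD : IsIdempotentElem D := isIdempotentElem_one_sub_sub_mul_star hP hP'
    (by rwa [star_eq_conjTranspose]) hPZP
  have hD' : Dᴴ = D := by
    simp only [D, ← star_eq_conjTranspose, star_sub, star_one, hP', star_mul, star_star,
      Matrix.mul_assoc]
  have : (Z * P)ᴴ * (Z * P) - Z * P * (Z * P)ᴴ - diagonal (refSign a₀) = Dᴴ * D := by
    rw [hD', hD.eq, hRR, hsign]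
    simp only [D, star_eq_conjTranspose]
    abel
  rw [this]
  exact posSemidef_conjTranspose_mul_self D

theorem posSemidef_commutator_sum_siteOp_raisingPart (hZ : Zᴴ * Z = 1) (hZ₀ : Z a₀ a₀ = 0)
    (J : Finset (Fin n)) :
    let A := ∑ i ∈ J, siteOp i (raisingPart a₀ Z)
    (Aᴴ * A - A * Aᴴ - diagonal fun s : Fin n → κ => ∑ i ∈ J, refSign a₀ (s i)).PosSemidef := by
  intro A
  set R := raisingPart a₀ Z
  have hcomm : ∀ i ∈ J, ∀ j ∈ J, i ≠ j → Commute (star (siteOp i R)) (siteOp j R) :=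
    fun i _ j _ hij => by
      rw [Commute, SemiconjBy, star_eq_conjTranspose, conjTranspose_siteOp, siteOp_mul_comm hij]
  simp only [A, ← star_eq_conjTranspose]
  rw [star_sum_mul_sum_of_commute J _ hcomm, add_sub_cancel_left, ← sum_siteOp_diagonal,
    ← sum_sub_distrib]
  refine posSemidef_sum J fun i _ => ?_
  simpa only [star_eq_conjTranspose, conjTranspose_siteOp, siteOp_mul, ← siteOp_sub] using
    posSemidef_siteOp i (posSemidef_commutator_raisingPart hZ hZ₀)

/-- `0 = ‖A w‖² ≥ ⟨w, (A⋆A - AA⋆) w⟩ ≥ ∑ₛ (#J - 2 wt s) |w s|² > 0` for the raising operator `A`,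
where `wt s` is the Hamming distance from `s` to `a₀^{⊗n}`. -/
theorem eq_zero_of_sum_siteOp_raisingPart_mulVec_eq_zero (hZ : Zᴴ * Z = 1) (hZ₀ : Z a₀ a₀ = 0)
    {J : Finset (Fin n)} {w : (Fin n → κ) → ℂ}
    (hw : ∀ s, w s ≠ 0 → 2 * hammingDist s (fun _ => a₀) < #J)
    (h : (∑ i ∈ J, siteOp i (raisingPart a₀ Z)) *ᵥ w = 0) : w = 0 := by
  set A := ∑ i ∈ J, siteOp i (raisingPart a₀ Z)
  set d : (Fin n → κ) → ℂ := fun s => ∑ i ∈ J, refSign a₀ (s i)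
  by_contra hw0
  obtain ⟨s₀, hs₀⟩ := Function.ne_iff.mp hw0
  have hpos : 0 < (star w ⬝ᵥ (diagonal d *ᵥ w)).re := by
    rw [re_star_dotProduct_diagonal_mulVec]
    refine sum_pos' (fun s _ => ?_) ⟨s₀, mem_univ _, ?_⟩
    · by_cases hs : w s = 0
      · simp [hs]
      · exact mul_nonneg (re_sum_refSign_pos (hw s hs)).le (Complex.normSq_nonneg _)
    · exact mul_pos (re_sum_refSign_pos (hw s₀ hs₀)) (Complex.normSq_pos.mpr hs₀)
  have hdiag : diagonal d = Aᴴ * A - A * Aᴴ - (Aᴴ * A - A * Aᴴ - diagonal d) := by abel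
  have hAA : (Aᴴ * A) *ᵥ w = 0 := by rw [← mulVec_mulVec, h, mulVec_zero]
  rw [hdiag, sub_mulVec, sub_mulVec, hAA, dotProduct_sub, dotProduct_sub, dotProduct_zero,
    Complex.sub_re, Complex.sub_re, Complex.zero_re] at hpos
  have h₁ := (posSemidef_self_mul_conjTranspose A).re_dotProduct_nonneg w
  have h₂ := (posSemidef_commutator_sum_siteOp_raisingPart hZ hZ₀ J).re_dotProduct_nonneg w
  simp only [RCLike.re_to_complex] at h₁ h₂
  linarith

end Raising

section TopWeight
variable {κ : Type*} [DecidableEq κ] {n : ℕ} {a₀ : κ}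

theorem hammingDist_update_add (s : Fin n → κ) (i : Fin n) (a b : κ) :
    hammingDist (Function.update s i a) (fun _ => b) + (if s i = b then 0 else 1) =
      hammingDist s (fun _ => b) + (if a = b then 0 else 1) := by
  simp only [hammingDist, card_filter]
  rw [← add_sum_erase _ _ (mem_univ i), ← add_sum_erase _ _ (mem_univ i),
    sum_congr rfl fun j hj => by rw [Function.update_of_ne (ne_of_mem_erase hj)]]
  by_cases ha : a = b <;> by_cases hs : s i = b <;> simp [ha, hs] <;> omega

variable [Fintype κ] {Z : Matrix κ κ ℂ}

theorem siteOp_raisingPart_mulVec_apply (i : Fin n) (w : (Fin n → κ) → ℂ) (s : Fin n → κ) :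
    (siteOp i (raisingPart a₀ Z) *ᵥ w) s = Z (s i) a₀ * w (Function.update s i a₀) := by
  rw [siteOp_mulVec_apply, sum_eq_single a₀ (fun a _ ha => by simp [raisingPart, ha]) (by simp)]
  simp [raisingPart]

/-- Only the raising part of `Z_i` maps weight `k` to weight `k + 1`. -/
theorem sum_siteOp_raisingPart_mulVec_topWeight_eq_zero (hZ₀ : Z a₀ a₀ = 0)
    {J : Finset (Fin n)} {k : ℕ} {v : (Fin n → κ) → ℂ}
    (hv : ∀ s, k < hammingDist s (fun _ => a₀) → v s = 0)
    (h : (∑ i ∈ J, siteOp i Z) *ᵥ v = 0) :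
    (∑ i ∈ J, siteOp i (raisingPart a₀ Z)) *ᵥ
      (fun s => if hammingDist s (fun _ => a₀) = k then v s else 0) = 0 := by
  set w : (Fin n → κ) → ℂ := fun s => if hammingDist s (fun _ => a₀) = k then v s else 0
  have hw : ∀ u, k ≤ hammingDist u (fun _ => a₀) → w u = v u := fun u hu => by
    by_cases hk : hammingDist u (fun _ => a₀) = k
    · simp [w, hk]
    · simp [w, hk, hv u (by omega)]
  funext s
  have hupd := hammingDist_update_add s (b := a₀)
  rw [sum_mulVec, Finset.sum_apply, Pi.zero_apply]
  simp only [siteOp_raisingPart_mulVec_apply]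
  by_cases hs : hammingDist s (fun _ => a₀) = k + 1
  · have hvs := congrFun h s
    rw [sum_mulVec, Finset.sum_apply, Pi.zero_apply] at hvs
    rw [← hvs]
    refine sum_congr rfl fun i _ => ?_
    rw [siteOp_mulVec_apply, sum_eq_single a₀ (fun a _ ha => ?_) (by simp)]
    · have := hupd i a₀; rw [if_pos rfl] at this
      rw [hw _ (by split_ifs at this <;> omega)]
    · have := hupd i a; rw [if_neg ha] at this
      rw [hv _ (by split_ifs at this <;> omega), mul_zero]
  · refine sum_eq_zero fun i _ => ?_
    by_cases hsi : s i = a₀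
    · rw [hsi, hZ₀, zero_mul]
    · have := hupd i a₀; rw [if_pos rfl, if_neg hsi] at this
      simp [w, show hammingDist (Function.update s i a₀) (fun _ => a₀) ≠ k by omega]

theorem eq_zero_of_sum_siteOp_mulVec_eq_zero (hZ : Zᴴ * Z = 1) (hZ₀ : Z a₀ a₀ = 0)
    {J : Finset (Fin n)} {r : ℕ} (hJ : 2 * r < #J) {v : (Fin n → κ) → ℂ}
    (hv : ∀ s, r < hammingDist s (fun _ => a₀) → v s = 0)
    (h : (∑ i ∈ J, siteOp i Z) *ᵥ v = 0) : v = 0 := by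
  by_contra hv0
  obtain ⟨s₀, hs₀⟩ := Function.ne_iff.mp hv0
  obtain ⟨s₁, hs₁, hmax⟩ := exists_max_image {s | v s ≠ 0} (hammingDist · (fun _ => a₀))
    ⟨s₀, by simpa using hs₀⟩
  rw [mem_filter_univ] at hs₁
  set k := hammingDist s₁ (fun _ => a₀)
  have hkr : k ≤ r := not_lt.mp fun hk => hs₁ (hv s₁ hk)
  have htop : ∀ s, k < hammingDist s (fun _ => a₀) → v s = 0 := fun s hs =>
    not_not.mp fun h => (hmax s (by simpa using h)).not_gt hs
  have hw := eq_zero_of_sum_siteOp_raisingPart_mulVec_eq_zero hZ hZ₀ (fun s hs => ?_)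
    (sum_siteOp_raisingPart_mulVec_topWeight_eq_zero hZ₀ htop h)
  · exact hs₁ (by simpa [k] using congrFun hw s₁)
  · have : hammingDist s (fun _ => a₀) = k := not_not.mp fun h' => hs (if_neg h')
    omega

end TopWeight

section ChangeOfBasis
variable {κ : Type*} [Fintype κ] [DecidableEq κ] {n : ℕ}

theorem exists_mem_unitaryGroup_apply_eq {ψ : κ → ℂ} (hψ : ∑ a, Complex.normSq (ψ a) = 1)
    (a₀ : κ) : ∃ U ∈ unitaryGroup κ ℂ, ∀ a, U a a₀ = ψ a := by
  set ψ' : EuclideanSpace ℂ κ := WithLp.toLp 2 ψ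
  have hnorm : ‖ψ'‖ = 1 := by
    rw [EuclideanSpace.norm_eq, Real.sqrt_eq_one, ← hψ]
    exact sum_congr rfl fun a _ => Complex.sq_norm _
  have horth : Orthonormal ℂ (({a₀} : Set κ).domRestrict fun _ => ψ') := by
    refine ⟨fun _ => hnorm, fun i j hij => (hij (Subtype.ext ?_)).elim⟩
    rw [i.2, j.2]
  obtain ⟨b, hb⟩ := horth.exists_orthonormalBasis_extension_of_card_eq
    (finrank_euclideanSpace (𝕜 := ℂ) (ι := κ))
  refine ⟨(EuclideanSpace.basisFun κ ℂ).toBasis.toMatrix b,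
    (EuclideanSpace.basisFun κ ℂ).toMatrix_orthonormalBasis_mem_unitary b, fun a => ?_⟩
  rw [Module.Basis.toMatrix_apply, OrthonormalBasis.coe_toBasis_repr_apply,
    EuclideanSpace.basisFun_repr, hb a₀ rfl]

theorem conjTranspose_mulVec_apply_eq_zero {U : Matrix κ κ ℂ} (hU : U ∈ unitaryGroup κ ℂ)
    {ψ : κ → ℂ} {a₀ : κ} (hUψ : ∀ a, U a a₀ = ψ a) {a : κ} (ha : a ≠ a₀) :
    (Uᴴ *ᵥ ψ) a = 0 := by
  rw [show ψ = U *ᵥ Pi.single a₀ 1 by funext c; simp [hUψ], mulVec_mulVec,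
    ← star_eq_conjTranspose, mem_unitaryGroup_iff'.mp hU, one_mulVec, Pi.single_apply, if_neg ha]

theorem prodState_const_mul_prodState_const {A B : Matrix κ κ ℂ} (hAB : A * B = 1) :
    prodState (fun _ : Fin n => A) * prodState (fun _ => B) = 1 := by
  rw [prodState_mul, ← prodState_one]
  congr 1
  exact funext fun _ => hAB

theorem prodState_const_mul_siteOp_mul {A B : Matrix κ κ ℂ} (hAB : A * B = 1) (i : Fin n)
    (Z : Matrix κ κ ℂ) :
    prodState (fun _ => A) * siteOp i Z * prodState (fun _ => B) = siteOp i (A * Z * B) := by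
  rw [siteOp, prodState_mul, prodState_mul, siteOp]
  congr 1
  funext j
  by_cases hj : j = i
  · subst hj; simp
  · simp [Function.update_of_ne hj, hAB]

theorem sum_siteOp_conj_mulVec {A B : Matrix κ κ ℂ} (hAB : A * B = 1) (hBA : B * A = 1)
    (J : Finset (Fin n)) (Z : Matrix κ κ ℂ) (v : (Fin n → κ) → ℂ) :
    (∑ i ∈ J, siteOp i (A * Z * B)) *ᵥ (prodState (fun _ => A) *ᵥ v) =
      prodState (fun _ => A) *ᵥ ((∑ i ∈ J, siteOp i Z) *ᵥ v) := by
  simp_rw [← prodState_const_mul_siteOp_mul hAB, ← sum_mul, ← mul_sum, mulVec_mulVec,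
    Matrix.mul_assoc, prodState_const_mul_prodState_const hBA, Matrix.mul_one]

theorem eq_zero_of_prodState_const_mulVec_eq_zero {A B : Matrix κ κ ℂ} (hBA : B * A = 1)
    {v : (Fin n → κ) → ℂ} (h : prodState (fun _ => A) *ᵥ v = 0) : v = 0 := by
  rw [← one_mulVec v, ← prodState_const_mul_prodState_const hBA, ← mulVec_mulVec, h, mulVec_zero]

end ChangeOfBasis

section Span
variable {κ : Type*}

/-- `u = ψ ⊗ g`, with `ψ` on the `j`-th tensor factor. -/
def FactorsAt {ι : Type*} [DecidableEq ι] (j : ι) (ψ : κ → ℂ) (u : (ι → κ) → ℂ) : Prop :=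
  ∃ g : (ι → κ) → ℂ, (∀ x a, g (Function.update x j a) = g x) ∧ u = fun x => ψ (x j) * g x

theorem FactorsAt.permVec {n : ℕ} {j : Fin n} {ψ : κ → ℂ} {u : (Fin n → κ) → ℂ}
    (hu : FactorsAt j ψ u) (π : Equiv.Perm (Fin n)) : FactorsAt (π j) ψ (permVec π u) := by
  obtain ⟨g, hg, rfl⟩ := hu
  refine ⟨fun x => g fun i => x (π i), fun x a => ?_, rfl⟩
  have : (fun i => Function.update x (π j) a (π i)) = Function.update (fun i => x (π i)) j a := by
    funext i
    simp only [Function.update_apply, π.injective.eq_iff]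
  simp only [this, hg]

theorem factorsAt_baseVec [Fintype κ] {n r : ℕ} (hrn : r ≤ n) (ψ : κ → ℂ)
    (ω : (Fin r → κ) → ℂ) (i : Fin (n - r)) :
    FactorsAt (Fin.castLE (Nat.sub_le n r) i) ψ (baseVec n r hrn ψ ω) := by
  refine ⟨fun x : Fin n → κ => (∏ l ∈ univ.erase i, ψ (x (Fin.castLE (Nat.sub_le n r) l))) *
    ω (fun j : Fin r => x ⟨n - r + j.val, by have := j.isLt; omega⟩), fun x a => ?_,
    funext fun x => ?_⟩
  · have hω : ∀ j : Fin r, (⟨n - r + j.val, by have := j.isLt; omega⟩ : Fin n) ≠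
        Fin.castLE (Nat.sub_le n r) i := fun j => Fin.ne_of_val_ne (by simp; omega)
    simp only [Function.update_of_ne (hω _)]
    congr 1
    refine prod_congr rfl fun l hl => ?_
    rw [Function.update_of_ne ((Fin.castLE_injective _).ne (ne_of_mem_erase hl))]
  · simp only [baseVec]
    rw [← mul_prod_erase _ _ (mem_univ i), mul_assoc]

variable [Fintype κ]

theorem sum_apply_mul_eq_zero {ι : Type*} [Fintype ι] [DecidableEq ι] {j : ι} {f : κ → ℂ}
    (hf : ∑ a, f a = 0) {G : (ι → κ) → ℂ} (hG : ∀ x a, G (Function.update x j a) = G x) :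
    ∑ x, f (x j) * G x = 0 := by
  rcases isEmpty_or_nonempty κ with hκ | ⟨⟨b⟩⟩
  · have : IsEmpty (ι → κ) := ⟨fun x => hκ.elim (x j)⟩
    simp
  set e := Equiv.funSplitAt j κ
  have hsplit : ∀ a t, e.symm (a, t) = Function.update (e.symm (b, t)) j a := fun a t => by
    funext l
    by_cases hl : l = j
    · subst hl; simp [e]
    · simp [e, hl]
  rw [← e.symm.sum_comp, Fintype.sum_prod_type, sum_congr rfl fun a _ => sum_congr rfl fun t _ => by
    rw [hsplit a t, hG, Function.update_self]]
  simp_rw [← mul_sum, ← sum_mul, hf, zero_mul]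

theorem FactorsAt.prodState_mulVec_eq_zero {ι : Type*} [Fintype ι] [DecidableEq ι] {j : ι}
    {ψ : κ → ℂ} {u : (ι → κ) → ℂ} (hu : FactorsAt j ψ u) (X : ι → Matrix κ κ ℂ) {s : ι → κ}
    (hs : (X j *ᵥ ψ) (s j) = 0) : (prodState X *ᵥ u) s = 0 := by
  obtain ⟨g, hg, rfl⟩ := hu
  simp only [mulVec, dotProduct, prodState]
  have hsplit : ∀ x : ι → κ, (∏ l, X l (s l) (x l)) * (ψ (x j) * g x) =
      X j (s j) (x j) * ψ (x j) * ((∏ l ∈ univ.erase j, X l (s l) (x l)) * g x) := fun x => by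
    rw [← mul_prod_erase _ _ (mem_univ j)]; ring
  rw [sum_congr rfl fun x _ => hsplit x]
  refine sum_apply_mul_eq_zero hs fun x a => ?_
  rw [hg, prod_congr rfl fun l hl => by rw [Function.update_of_ne (ne_of_mem_erase hl)]]

/-- Each generator of `V^n_r` carries `ψ` on `n - r` sites, so in a basis taking `ψ` to `a₀` its
coefficients vanish at Hamming weight `> r`. -/
theorem prodState_mulVec_eq_zero_of_mem_span_Vset [DecidableEq κ] {n r : ℕ} (hrn : r ≤ n)
    {ψ : κ → ℂ} {a₀ : κ} {V : Matrix κ κ ℂ} (hψ : ∀ a, a ≠ a₀ → (V *ᵥ ψ) a = 0)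
    {v : (Fin n → κ) → ℂ} (hv : v ∈ Submodule.span ℂ (Vset n r hrn ψ)) {s : Fin n → κ}
    (hs : r < hammingDist s (fun _ => a₀)) : (prodState (fun _ => V) *ᵥ v) s = 0 := by
  let f := (LinearMap.proj s).comp (mulVecLin (prodState fun _ : Fin n => V))
  refine (Submodule.span_le (p := LinearMap.ker f)).mpr (fun u hu => ?_) hv
  obtain ⟨π, ω, -, rfl⟩ := hu
  let ψSites := univ.map ((Fin.castLEEmb (Nat.sub_le n r)).trans π.toEmbedding)
  obtain ⟨j, hj⟩ := inter_nonempty_of_card_lt_card_add_card (subset_univ ψSites)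
    (subset_univ {j | s j ≠ a₀}) (by simp [ψSites, hammingDist] at hs ⊢; omega)
  obtain ⟨hjψ, hjs⟩ := mem_inter.mp hj
  obtain ⟨i, -, rfl⟩ := mem_map.mp hjψ
  exact ((factorsAt_baseVec hrn ψ ω i).permVec π).prodState_mulVec_eq_zero _
    (hψ _ (mem_filter.mp hjs).2)

end Span

section Xi

/-- The first `2 ⌊n/2⌋` sites: on them every basis state in the support of `ξₙ` has exactly as
many ones as zeros. -/
def balancedSites (n : ℕ) : Finset (Fin n) := {i | (i : ℕ) < 2 * (n / 2)}

theorem card_balancedSites (n : ℕ) : #(balancedSites n) = 2 * (n / 2) := by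
  rw [balancedSites, Fin.card_filter_val_lt]
  omega

theorem two_mul_sum_balancedSites_of_xi_apply_self_ne_zero {n : ℕ} {x : Fin n → Fin 2}
    (hx : xi n x x ≠ 0) : 2 * ∑ i ∈ balancedSites n, (x i : ℕ) = 2 * (n / 2) := by
  cases n with
  | zero => simp [balancedSites]
  | succ m =>
    by_cases he : Even (m + 1)
    · have hB : balancedSites (m + 1) = univ := by
        ext i; simp [balancedSites, Nat.two_mul_div_two_of_even he, Nat.lt_succ_iff.mp i.isLt]
      rw [show xi (m + 1) = xiEven (m + 1) from if_pos he, xiEven, diagonal_apply_eq] at hx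
      rw [hB, Nat.two_mul_div_two_of_even he]
      exact not_not.mp fun h => hx (if_neg h)
    · have hm : 2 * ((m + 1) / 2) = m := by
        have := Nat.odd_iff.mp (Nat.not_even_iff_odd.mp he); omega
      have hsum : ∑ i ∈ balancedSites (m + 1), (x i : ℕ) = ∑ i : Fin m, (x i.castSucc : ℕ) := by
        rw [balancedSites, sum_filter, Fin.sum_univ_castSucc, hm]
        simp
      rw [show xi (m + 1) = _ from if_neg he] at hx
      simp only [xiEven, diagonal_apply_eq] at hx
      rw [hsum, hm]
      exact not_not.mp fun h => hx (by simp [h])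

theorem _root_.Matrix.PosSemidef.apply_eq_zero_of_apply_self_eq_zero {m : Type*} [Fintype m]
    [DecidableEq m] {A : Matrix m m ℂ} (hA : A.PosSemidef) {i : m} (hi : A i i = 0) (j : m) :
    A i j = 0 := by
  have hcol : A *ᵥ Pi.single i 1 = 0 :=
    (hA.dotProduct_mulVec_zero_iff _).mp (by simp [hi])
  have hji : A j i = 0 := by simpa [mulVec_single_one] using congrFun hcol j
  rw [← hA.1.apply i j, hji, star_zero]

theorem traceOutE_apply_self_ne_zero {dA dE n : ℕ}
    {Ω : Matrix (Fin n → Fin dA × Fin dE) (Fin n → Fin dA × Fin dE) ℂ} (hΩ : Ω.PosSemidef)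
    {p : Fin n → Fin dA × Fin dE} (hp : Ω p p ≠ 0) :
    traceOutE Ω (fun i => (p i).1) (fun i => (p i).1) ≠ 0 := by
  rw [traceOutE, Ne, sum_eq_zero_iff_of_nonneg fun e _ => hΩ.diag_nonneg]
  exact fun h => hp (h (fun i => (p i).2) (mem_univ _))

variable {dE : ℕ}

/-- `σ_z ⊗ 𝟙_E`, as the diagonal of a matrix on `ℂ² ⊗ ℂ^{dE}`. -/
def zSign (c : Fin 2 × Fin dE) : ℂ := if c.1 = 0 then 1 else -1

theorem zSign_eq (c : Fin 2 × Fin dE) : zSign c = 1 - 2 * ((c.1 : ℕ) : ℂ) := by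
  rcases c with ⟨b, e⟩
  fin_cases b <;> simp [zSign]; norm_num

theorem sum_zSign_eq_zero {n : ℕ} {J : Finset (Fin n)} {p : Fin n → Fin 2 × Fin dE}
    (hp : 2 * ∑ i ∈ J, ((p i).1 : ℕ) = #J) : ∑ i ∈ J, zSign (p i) = 0 := by
  simp only [zSign_eq, sum_sub_distrib, ← mul_sum, sum_const, nsmul_eq_mul, mul_one]
  rw [sub_eq_zero]
  exact_mod_cast hp.symm

theorem sum_siteOp_zSign_mul_eq_zero {n : ℕ}
    {Ω : Matrix (Fin n → Fin 2 × Fin dE) (Fin n → Fin 2 × Fin dE) ℂ} (hΩ : Ω.PosSemidef)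
    (hξ : xi n = traceOutE Ω) :
    (∑ i ∈ balancedSites n, siteOp i (diagonal zSign)) * Ω = 0 := by
  rw [sum_siteOp_diagonal]
  ext p p'
  rw [diagonal_mul, Matrix.zero_apply]
  by_cases hp : Ω p p = 0
  · rw [hΩ.apply_eq_zero_of_apply_self_eq_zero hp, mul_zero]
  · have := two_mul_sum_balancedSites_of_xi_apply_self_ne_zero
      (hξ ▸ traceOutE_apply_self_ne_zero hΩ hp)
    rw [sum_zSign_eq_zero (by rwa [card_balancedSites]), zero_mul]

theorem conj_diagonal_zSign_apply_self {U : Matrix (Fin 2 × Fin dE) (Fin 2 × Fin dE) ℂ}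
    {ψ : Fin 2 × Fin dE → ℂ} {a₀ : Fin 2 × Fin dE} (hUψ : ∀ c, U c a₀ = ψ c)
    (hred : (2 : ℂ)⁻¹ • (1 : Matrix (Fin 2) (Fin 2) ℂ) = reducedA ψ) :
    (Uᴴ * diagonal zSign * U : Matrix _ _ ℂ) a₀ a₀ = 0 := by
  have h0 := congrFun (congrFun hred 0) 0
  have h1 := congrFun (congrFun hred 1) 1
  simp only [Matrix.smul_apply, one_apply_eq, smul_eq_mul, mul_one, reducedA] at h0 h1
  have hterm : ∀ c, star (U c a₀) * zSign c * U c a₀ = zSign c * (ψ c * starRingEnd ℂ (ψ c)) :=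
    fun c => by rw [hUψ, Complex.star_def]; ring
  rw [mul_apply]
  simp only [mul_diagonal, conjTranspose_apply, hterm, Fintype.sum_prod_type, Fin.sum_univ_two]
  simp [zSign, ← h0, ← h1]

theorem conj_diagonal_zSign_mem_unitaryGroup {U : Matrix (Fin 2 × Fin dE) (Fin 2 × Fin dE) ℂ}
    (hU : U ∈ unitaryGroup _ ℂ) : Uᴴ * diagonal zSign * U ∈ unitaryGroup _ ℂ := by
  have hz : diagonal (zSign (dE := dE)) ∈ unitaryGroup _ ℂ := by
    rw [mem_unitaryGroup_iff', star_eq_conjTranspose, diagonal_conjTranspose,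
      diagonal_mul_diagonal, ← diagonal_one]
    congr 1; ext c; by_cases hc : c.1 = 0 <;> simp [zSign, hc]
  exact mul_mem (mul_mem (Unitary.star_mem hU) hz) hU

end Xi

theorem xi_not_MSR_general
    (n r : ℕ) (hn : 2 ≤ n) (hr : 4 * r ≤ n - 1) (hrn : r ≤ n) :
    ¬ IsMSR n r hrn (((2 : ℂ))⁻¹ • (1 : Matrix (Fin 2) (Fin 2) ℂ)) (xi n) := by
  rintro ⟨dE, ψ, hψ, hred, Ω, ⟨hΩ, htr⟩, hξ, -, hrange⟩
  obtain ⟨a₀, -⟩ := exists_ne_zero_of_sum_ne_zero (hψ ▸ one_ne_zero)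
  obtain ⟨U, hU, hUψ⟩ := exists_mem_unitaryGroup_apply_eq hψ a₀
  obtain ⟨q, hq⟩ : ∃ q, Ω q q ≠ 0 := by
    by_contra! h
    simp [trace, h] at htr
  have hUU : U * Uᴴ = 1 := mem_unitaryGroup_iff.mp hU
  have hUU' : Uᴴ * U = 1 := mem_unitaryGroup_iff'.mp hU
  have hcoeff : prodState (fun _ => Uᴴ) *ᵥ (Ω *ᵥ Pi.single q 1) = 0 :=
    eq_zero_of_sum_siteOp_mulVec_eq_zero
      (mem_unitaryGroup_iff'.mp (conj_diagonal_zSign_mem_unitaryGroup hU))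
      (conj_diagonal_zSign_apply_self hUψ hred) (J := balancedSites n)
      (by rw [card_balancedSites]; omega)
      (fun s hs => prodState_mulVec_eq_zero_of_mem_span_Vset hrn
        (fun _ => conjTranspose_mulVec_apply_eq_zero hU hUψ) (hrange ⟨_, rfl⟩) hs)
      (by rw [sum_siteOp_conj_mulVec hUU' hUU, mulVec_mulVec _ _ Ω,
        sum_siteOp_zSign_mul_eq_zero hΩ hξ, zero_mulVec, mulVec_zero])
  have hv := eq_zero_of_prodState_const_mulVec_eq_zero hUU hcoeff
  exact hq (by simpa [mulVec_single_one] using congrFun hv q)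

/-- For every `n ≥ 2` and every `1 ≤ r ≤ (n−1)/4`, the state `ξₙ` is
not a `binom(n,r)`-almost i.i.d. (MSR almost i.i.d.) state in `τ = 𝟙₂/2`. -/
theorem xi_not_MSR
    (n r : ℕ) (hn : 2 ≤ n) (hr1 : 1 ≤ r) (hr : 4 * r ≤ n - 1) (hrn : r ≤ n) :
    ¬ IsMSR n r hrn (((2 : ℂ))⁻¹ • (1 : Matrix (Fin 2) (Fin 2) ℂ)) (xi n) :=
  xi_not_MSR_general n r hn hr hrn

end AlmostIID
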